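/- If idempotents lift modulo nil(R), and x + nil(R) and y + nil(R) are adjacent in the nil clean graph of R/nil(R), then every element of the coset x + nil(R) is adjacent to every element of the coset y + nil(R) in the nil clean graph of R. -/

import Mathlib

def IsNilClean {R : Type*} [CommRing R] (r : R) : Prop :=
  ∃ n e : R, IsNilpotent n ∧ IsIdempotentElem e ∧ r = n + e

def nilCleanGraph (R : Type*) [CommRing R] : SimpleGraph R where
  Adj x y := x ≠ y ∧ IsNilClean (x + y)
  symm := by
    refine ⟨?_⟩
    rintro x y ⟨hxy, n, e, hn, he, h⟩
    exact ⟨hxy.symm, n, e, hn, he, by rwa [add_comm]⟩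
  loopless := by refine ⟨?_⟩; rintro x ⟨h, -⟩; exact h rfl

/-! Modulo a nil ideal, nilpotents pull back to nilpotents and idempotents lift to idempotents
(`exists_isIdempotentElem_eq_of_ker_isNilpotent`), so a preimage of a nil clean element is again
nil clean: if `f r = n + e`, lift `e` to an idempotent `e'`, and `r - e'` is nilpotent because its
image `n` is. -/

theorem isNilpotent_of_ker_isNilpotent {R S : Type*} [Ring R] [Semiring S] {f : R →+* S}
    (hf : ∀ x ∈ RingHom.ker f, IsNilpotent x) {r : R} (hr : IsNilpotent (f r)) :
    IsNilpotent r := by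
  obtain ⟨k, hk⟩ := hr
  exact (hf (r ^ k) (by rwa [RingHom.mem_ker, map_pow])).of_pow

section

variable {R S : Type*} [CommRing R] [CommRing S] {f : R →+* S}

theorem IsNilClean.of_map (hsurj : Function.Surjective f)
    (hf : ∀ x ∈ RingHom.ker f, IsNilpotent x) {r : R} (hr : IsNilClean (f r)) : IsNilClean r := by
  obtain ⟨n, e, hn, he, hre⟩ := hr
  obtain ⟨e', he', rfl⟩ := exists_isIdempotentElem_eq_of_ker_isNilpotent f hf e (hsurj e) he
  have hsub : IsNilpotent (r - e') :=
    isNilpotent_of_ker_isNilpotent hf (by rwa [map_sub, hre, add_sub_cancel_right])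
  exact ⟨r - e', e', hsub, he', (sub_add_cancel r e').symm⟩

theorem nilCleanGraph_adj_of_map (hsurj : Function.Surjective f)
    (hf : ∀ x ∈ RingHom.ker f, IsNilpotent x) {a b : R}
    (hab : (nilCleanGraph S).Adj (f a) (f b)) : (nilCleanGraph R).Adj a b :=
  ⟨fun h => hab.ne (congrArg f h), IsNilClean.of_map hsurj hf (by rw [map_add]; exact hab.2)⟩

end

theorem stmt1_general (R : Type*) [CommRing R]
    (x y : R)
    (hadj : (nilCleanGraph (R ⧸ nilradical R)).Adj
      (Ideal.Quotient.mk (nilradical R) x) (Ideal.Quotient.mk (nilradical R) y))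
    (a b : R)
    (ha : Ideal.Quotient.mk (nilradical R) a = Ideal.Quotient.mk (nilradical R) x)
    (hb : Ideal.Quotient.mk (nilradical R) b = Ideal.Quotient.mk (nilradical R) y) :
    (nilCleanGraph R).Adj a b := by
  refine nilCleanGraph_adj_of_map Ideal.Quotient.mk_surjective (fun r hr => ?_) (by rwa [ha, hb])
  rwa [Ideal.mk_ker, mem_nilradical] at hr

theorem stmt1 (R : Type*) [CommRing R]
    (hlift : ∀ e : R ⧸ nilradical R, IsIdempotentElem e →
      ∃ f : R, IsIdempotentElem f ∧ Ideal.Quotient.mk (nilradical R) f = e)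
    (x y : R)
    (hadj : (nilCleanGraph (R ⧸ nilradical R)).Adj
      (Ideal.Quotient.mk (nilradical R) x) (Ideal.Quotient.mk (nilradical R) y))
    (a b : R)
    (ha : Ideal.Quotient.mk (nilradical R) a = Ideal.Quotient.mk (nilradical R) x)
    (hb : Ideal.Quotient.mk (nilradical R) b = Ideal.Quotient.mk (nilradical R) y) :
    (nilCleanGraph R).Adj a b :=
  stmt1_general R x y hadj a b ha hb
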